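/- arXiv:2104.10904 — 6 statements merged into one kernel-verified Lean document; each statement's English description precedes it below -/
import Mathlib

section
/- With 0 < a₁ ≤ ⋯ ≤ aₙ, b > 0, c₀ = ∏ᵢ aᵢ/(aᵢ+2b), and g(ψ) := −(ψⁿ − c₀∏ᵢ(ψ+2b/aᵢ)) / (2(ψ^{n−1} − c₀∏_{i=2}ⁿ(ψ+2b/aᵢ))), one has g(1) = 0, g(ψ) < 0 for all ψ > 1, and ψ = 1 is the unique root of g in [1, ∞). -/
/-!
Writing `t = a / (a + c)`, one has `t * (ψ + c / a) = t * ψ + (1 - t)`, a convex combination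
of `ψ` and `1`. Hence `c₀ ∏ᵢ (ψ + 2b/aᵢ)` is a product of `n` such combinations, which all
equal `1` at `ψ = 1` and lie strictly between `0` and `ψ` for `ψ > 1`. So the numerator of `g`
vanishes at `1`, and for `ψ > 1` both numerator and denominator are positive (in the
denominator the leftover factor `a₁ / (a₁ + 2b) < 1` provides the strict inequality).
-/

open Finset

section ConvexFactor

variable {a c ψ : ℝ}

lemma div_add_mul_add_div (ha : a ≠ 0) (c ψ : ℝ) :
    a / (a + c) * (ψ + c / a) = (a * ψ + c) / (a + c) := by
  rw [div_mul_eq_mul_div, mul_add, mul_div_cancel₀ c ha]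

lemma mul_add_div_add_pos (ha : 0 < a) (hc : 0 < c) (hψ : 0 ≤ ψ) :
    0 < (a * ψ + c) / (a + c) := by
  positivity

lemma mul_add_div_add_lt (ha : 0 < a) (hc : 0 < c) (hψ : 1 < ψ) :
    (a * ψ + c) / (a + c) < ψ := by
  rw [div_lt_iff₀ (by positivity)]
  nlinarith

lemma div_add_lt_one (ha : 0 < a) (hc : 0 < c) : a / (a + c) < 1 :=
  (div_lt_one (by positivity)).2 (by linarith)

end ConvexFactor

section Products

variable {ι : Type*} {s : Finset ι} {a : ι → ℝ} {c ψ : ℝ}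

lemma prod_div_add_mul_prod_add_div (ha : ∀ i ∈ s, a i ≠ 0) (c ψ : ℝ) :
    (∏ i ∈ s, a i / (a i + c)) * ∏ i ∈ s, (ψ + c / a i)
      = ∏ i ∈ s, (a i * ψ + c) / (a i + c) := by
  rw [← prod_mul_distrib]
  exact prod_congr rfl fun i hi => div_add_mul_add_div (ha i hi) c ψ

lemma prod_mul_add_div_add_pos (ha : ∀ i ∈ s, 0 < a i) (hc : 0 < c) (hψ : 0 ≤ ψ) :
    0 < ∏ i ∈ s, (a i * ψ + c) / (a i + c) :=
  prod_pos fun i hi => mul_add_div_add_pos (ha i hi) hc hψ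

lemma prod_mul_add_div_add_le_pow (ha : ∀ i ∈ s, 0 < a i) (hc : 0 < c) (hψ : 1 < ψ) :
    ∏ i ∈ s, (a i * ψ + c) / (a i + c) ≤ ψ ^ #s :=
  (prod_le_prod (fun i hi => (mul_add_div_add_pos (ha i hi) hc (by linarith)).le)
    fun i hi => (mul_add_div_add_lt (ha i hi) hc hψ).le).trans_eq (prod_const ψ)

lemma prod_mul_add_div_add_lt_pow (hs : s.Nonempty) (ha : ∀ i ∈ s, 0 < a i) (hc : 0 < c)
    (hψ : 1 < ψ) : ∏ i ∈ s, (a i * ψ + c) / (a i + c) < ψ ^ #s :=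
  (prod_lt_prod_of_nonempty (fun i hi => mul_add_div_add_pos (ha i hi) hc (by linarith))
    (fun i hi => mul_add_div_add_lt (ha i hi) hc hψ) hs).trans_eq (prod_const ψ)

lemma prod_div_add_mul_prod_add_div_lt_pow (hs : s.Nonempty) (ha : ∀ i ∈ s, 0 < a i)
    (hc : 0 < c) (hψ : 1 < ψ) :
    (∏ i ∈ s, a i / (a i + c)) * ∏ i ∈ s, (ψ + c / a i) < ψ ^ #s := by
  rw [prod_div_add_mul_prod_add_div (fun i hi => (ha i hi).ne')]
  exact prod_mul_add_div_add_lt_pow hs ha hc hψ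

lemma prod_div_add_mul_prod_erase_add_div_lt_pow [DecidableEq ι] {j : ι} (hj : j ∈ s)
    (ha : ∀ i ∈ s, 0 < a i) (hc : 0 < c) (hψ : 1 < ψ) :
    (∏ i ∈ s, a i / (a i + c)) * ∏ i ∈ s.erase j, (ψ + c / a i) < ψ ^ (#s - 1) := by
  have ha' : ∀ i ∈ s.erase j, 0 < a i := fun i hi => ha i (mem_of_mem_erase hi)
  rw [← mul_prod_erase s _ hj, mul_assoc,
    prod_div_add_mul_prod_add_div (fun i hi => (ha' i hi).ne'), ← card_erase_of_mem hj]
  calc a j / (a j + c) * ∏ i ∈ s.erase j, (a i * ψ + c) / (a i + c)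
      < ∏ i ∈ s.erase j, (a i * ψ + c) / (a i + c) :=
        mul_lt_of_lt_one_left (prod_mul_add_div_add_pos ha' hc (by linarith))
          (div_add_lt_one (ha j hj) hc)
    _ ≤ ψ ^ #(s.erase j) := prod_mul_add_div_add_le_pow ha' hc hψ

end Products

theorem g_sign_and_unique_root_general {n : ℕ} (hn : 0 < n) (a : Fin n → ℝ) (b c0 : ℝ)
    (ha : ∀ i, 0 < a i) (hb : 0 < b)
    (hc0 : c0 = ∏ i, a i / (a i + 2 * b)) (g : ℝ → ℝ)
    (hg : ∀ ψ, g ψ = -((ψ ^ n - c0 * ∏ i, (ψ + 2 * b / a i))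
        / (2 * (ψ ^ (n - 1)
          - c0 * ∏ i ∈ Finset.univ.erase (⟨0, hn⟩ : Fin n), (ψ + 2 * b / a i))))) :
    g 1 = 0 ∧ (∀ ψ, 1 < ψ → g ψ < 0)
      ∧ (∀ ψ, 1 ≤ ψ → g ψ = 0 → ψ = 1) := by
  have ha' : ∀ i ∈ univ, 0 < a i := fun i _ => ha i
  have hc : 0 < 2 * b := by positivity
  have g_one : g 1 = 0 := by
    have hnum : c0 * ∏ i, (1 + 2 * b / a i) = 1 := by
      rw [hc0, prod_div_add_mul_prod_add_div fun i _ => (ha i).ne']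
      exact prod_eq_one fun i _ => by rw [mul_one, div_self (by linarith [ha i])]
    rw [hg, hnum, one_pow, sub_self, zero_div, neg_zero]
  have g_neg : ∀ ψ, 1 < ψ → g ψ < 0 := by
    intro ψ hψ
    have hnum := prod_div_add_mul_prod_add_div_lt_pow ⟨⟨0, hn⟩, mem_univ _⟩ ha' hc hψ
    have hden := prod_div_add_mul_prod_erase_add_div_lt_pow (mem_univ ⟨0, hn⟩) ha' hc hψ
    rw [← hc0, card_univ, Fintype.card_fin] at hnum hden
    rw [hg, neg_lt_zero]
    exact div_pos (sub_pos.2 hnum) (mul_pos two_pos (sub_pos.2 hden))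
  exact ⟨g_one, g_neg, fun ψ hψ hgψ =>
    hψ.eq_or_lt.elim Eq.symm fun h => absurd hgψ (g_neg ψ h).ne⟩

theorem g_sign_and_unique_root {n : ℕ} (hn : 0 < n) (a : Fin n → ℝ) (b c0 : ℝ)
    (ha : ∀ i, 0 < a i) (hmono : Monotone a) (hb : 0 < b)
    (hc0 : c0 = ∏ i, a i / (a i + 2 * b)) (g : ℝ → ℝ)
    (hg : ∀ ψ, g ψ = -((ψ ^ n - c0 * ∏ i, (ψ + 2 * b / a i))
        / (2 * (ψ ^ (n - 1)
          - c0 * ∏ i ∈ Finset.univ.erase (⟨0, hn⟩ : Fin n), (ψ + 2 * b / a i))))) :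
    g 1 = 0 ∧ (∀ ψ, 1 < ψ → g ψ < 0)
      ∧ (∀ ψ, 1 ≤ ψ → g ψ = 0 → ψ = 1) :=
  g_sign_and_unique_root_general hn a b c0 ha hb hc0 g hg
end

section
/- With notation as above, the derivative of g at ψ = 1 equals g′(1) = −(1/2)·Σᵢ₌₁ⁿ (a₁+2b)/(aᵢ+2b). In particular, if Σᵢ (a₁+2b)/(aᵢ+2b) > 2, then g′(1) < −1. -/
/-!
With `rᵢ = 2b/aᵢ` we have `c₀ = ∏ᵢ (1 + rᵢ)⁻¹`, so the numerator `N` of `g` vanishes at `ψ = 1`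
and `g'(1) = -N'(1) / (2 D(1))`, where `D` is the bracket in the denominator. Since
`c₀ ∏_{j ≠ i} (1 + rⱼ) = (1 + rᵢ)⁻¹ = aᵢ/(aᵢ + 2b)`, the product rule gives
`N'(1) = Σᵢ 2b/(aᵢ + 2b)`, and `D(1) = 2b/(a₁ + 2b)`.
-/

open Finset

theorem HasDerivAt.div_of_eq_zero {𝕜 : Type*} [NontriviallyNormedField 𝕜] {f g : 𝕜 → 𝕜}
    {f' g' x : 𝕜} (hf : HasDerivAt f f' x)
    (hg : HasDerivAt g g' x) (hfx : f x = 0) (hgx : g x ≠ 0) :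
    HasDerivAt (fun y => f y / g y) (f' / g x) x := by
  have hquot := hf.div hg hgx
  rwa [hfx, zero_mul, sub_zero, sq, mul_div_mul_right _ _ hgx] at hquot

theorem inv_prod_mul_prod_erase {ι K : Type*} [DecidableEq ι] [Field K] {s : Finset ι}
    {f : ι → K} (hf : ∀ j ∈ s, f j ≠ 0) {i : ι} (hi : i ∈ s) :
    (∏ j ∈ s, f j)⁻¹ * ∏ j ∈ s.erase i, f j = (f i)⁻¹ := by
  have hrest : ∏ j ∈ s.erase i, f j ≠ 0 :=
    prod_ne_zero_iff.2 fun j hj => hf j (mem_of_mem_erase hj)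
  rw [← mul_prod_erase s f hi, mul_inv, mul_assoc, inv_mul_cancel₀ hrest, mul_one]

section ShiftedProduct

variable {ι 𝕜 : Type*} [NontriviallyNormedField 𝕜] (s : Finset ι) (r : ι → 𝕜)

theorem hasDerivAt_pow_sub_mul_prod_add [DecidableEq ι] (k : ℕ) (c x : 𝕜) :
    HasDerivAt (fun ψ => ψ ^ k - c * ∏ i ∈ s, (ψ + r i))
      (k * x ^ (k - 1) - c * ∑ i ∈ s, ∏ j ∈ s.erase i, (x + r j)) x := by
  have hprod := HasDerivAt.fun_finsetProd (u := s) (fun i _ => (hasDerivAt_id x).add_const (r i))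
  simp only [smul_eq_mul, mul_one] at hprod
  exact (hasDerivAt_pow k x).sub (hprod.const_mul c)

variable {s r}

theorem pow_card_sub_inv_prod_mul_prod_add_one (hr : ∀ i ∈ s, 1 + r i ≠ 0) :
    (1 : 𝕜) ^ s.card - (∏ i ∈ s, (1 + r i))⁻¹ * ∏ i ∈ s, (1 + r i) = 0 := by
  rw [one_pow, inv_mul_cancel₀ (prod_ne_zero_iff.2 hr), sub_self]

theorem card_sub_inv_prod_mul_sum_prod_erase_add_one [DecidableEq ι]
    (hr : ∀ i ∈ s, 1 + r i ≠ 0) :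
    (s.card : 𝕜) * 1 ^ (s.card - 1) -
        (∏ i ∈ s, (1 + r i))⁻¹ * ∑ i ∈ s, ∏ j ∈ s.erase i, (1 + r j)
      = ∑ i ∈ s, (1 - (1 + r i)⁻¹) := by
  rw [one_pow, mul_one, mul_sum, sum_congr rfl fun i hi => inv_prod_mul_prod_erase hr hi,
    sum_sub_distrib, sum_const, nsmul_one]

theorem hasDerivAt_neg_pow_sub_prod_div_at_one [DecidableEq ι] (hr : ∀ i ∈ s, 1 + r i ≠ 0)
    {i₀ : ι} (hi₀ : i₀ ∈ s) (hr₀ : r i₀ ≠ 0) {c : 𝕜} (hc : c ≠ 0) :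
    HasDerivAt
      (fun ψ => -((ψ ^ s.card - (∏ i ∈ s, (1 + r i))⁻¹ * ∏ i ∈ s, (ψ + r i)) /
        (c * (ψ ^ (s.card - 1) - (∏ i ∈ s, (1 + r i))⁻¹ * ∏ i ∈ s.erase i₀, (ψ + r i)))))
      (-((∑ i ∈ s, (1 - (1 + r i)⁻¹)) / (c * (1 - (1 + r i₀)⁻¹)))) 1 := by
  have hN := hasDerivAt_pow_sub_mul_prod_add s r s.card (∏ i ∈ s, (1 + r i))⁻¹ 1
  rw [card_sub_inv_prod_mul_sum_prod_erase_add_one hr] at hN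
  have hD := (hasDerivAt_pow_sub_mul_prod_add (s.erase i₀) r (s.card - 1)
    (∏ i ∈ s, (1 + r i))⁻¹ 1).const_mul c
  have hD₁ : (1 : 𝕜) ^ (s.card - 1) - (∏ i ∈ s, (1 + r i))⁻¹ * ∏ i ∈ s.erase i₀, (1 + r i)
      = 1 - (1 + r i₀)⁻¹ := by
    rw [one_pow, inv_prod_mul_prod_erase hr hi₀]
  have hD₁_ne : c * (1 - (1 + r i₀)⁻¹) ≠ 0 := by
    rw [mul_ne_zero_iff_left hc, sub_ne_zero, ne_comm, inv_ne_one]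
    simpa using hr₀
  rw [← hD₁] at hD₁_ne ⊢
  exact (hN.div_of_eq_zero hD (pow_card_sub_inv_prod_mul_prod_add_one hr) hD₁_ne).fun_neg

end ShiftedProduct

theorem one_sub_inv_one_add_div {K : Type*} [Field K] {a t : K} (ha : a ≠ 0) (hat : a + t ≠ 0) :
    1 - (1 + t / a)⁻¹ = t / (a + t) := by
  field_simp
  ring

theorem deriv_g_at_one_general {n : ℕ} (hn : 0 < n) (a : Fin n → ℝ) (b c0 : ℝ)
    (ha : ∀ i, 0 < a i) (hb : 0 < b)
    (hc0 : c0 = ∏ i, a i / (a i + 2 * b)) (g : ℝ → ℝ)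
    (hg : ∀ ψ, g ψ = -((ψ ^ n - c0 * ∏ i, (ψ + 2 * b / a i))
        / (2 * (ψ ^ (n - 1)
          - c0 * ∏ i ∈ Finset.univ.erase (⟨0, hn⟩ : Fin n), (ψ + 2 * b / a i))))) :
    deriv g 1 = -(1 / 2) * ∑ i, (a ⟨0, hn⟩ + 2 * b) / (a i + 2 * b)
      ∧ ((2 < ∑ i, (a ⟨0, hn⟩ + 2 * b) / (a i + 2 * b)) → deriv g 1 < -1) := by
  set i₀ : Fin n := ⟨0, hn⟩
  have hab : ∀ i, 0 < a i + 2 * b := fun i => by linarith [ha i]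
  have hfactor : ∀ i, 1 + 2 * b / a i = (a i + 2 * b) / a i := fun i => by
    field_simp [(ha i).ne']
  have hr : ∀ i ∈ (univ : Finset (Fin n)), 1 + 2 * b / a i ≠ 0 := fun i _ => by
    rw [hfactor]
    exact (div_pos (hab i) (ha i)).ne'
  have hc0' : c0 = (∏ i, (1 + 2 * b / a i))⁻¹ := by
    simp only [hc0, hfactor, ← prod_inv_distrib, inv_div]
  have hderiv : HasDerivAt g
      (-((∑ i, 2 * b / (a i + 2 * b)) / (2 * (2 * b / (a i₀ + 2 * b))))) 1 := by
    have := hasDerivAt_neg_pow_sub_prod_div_at_one hr (mem_univ i₀)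
      (div_pos (mul_pos two_pos hb) (ha i₀)).ne' two_ne_zero
    simpa only [card_univ, Fintype.card_fin, ← hc0', ← funext hg,
      one_sub_inv_one_add_div (ha _).ne' (hab _).ne'] using this
  have key : deriv g 1 = -(1 / 2) * ∑ i, (a i₀ + 2 * b) / (a i + 2 * b) := by
    rw [hderiv.deriv, sum_div, neg_mul, mul_sum]
    refine congrArg _ (sum_congr rfl fun i _ => ?_)
    field_simp [(hab i).ne', (hab i₀).ne', hb.ne']
  exact ⟨key, fun h => by rw [key]; linarith⟩

theorem deriv_g_at_one {n : ℕ} (hn : 0 < n) (a : Fin n → ℝ) (b c0 : ℝ)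
    (ha : ∀ i, 0 < a i) (hmono : Monotone a) (hb : 0 < b)
    (hc0 : c0 = ∏ i, a i / (a i + 2 * b)) (g : ℝ → ℝ)
    (hg : ∀ ψ, g ψ = -((ψ ^ n - c0 * ∏ i, (ψ + 2 * b / a i))
        / (2 * (ψ ^ (n - 1)
          - c0 * ∏ i ∈ Finset.univ.erase (⟨0, hn⟩ : Fin n), (ψ + 2 * b / a i))))) :
    deriv g 1 = -(1 / 2) * ∑ i, (a ⟨0, hn⟩ + 2 * b) / (a i + 2 * b)
      ∧ ((2 < ∑ i, (a ⟨0, hn⟩ + 2 * b) / (a i + 2 * b)) → deriv g 1 < -1) :=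
  deriv_g_at_one_general hn a b c0 ha hb hc0 g hg
end

section
/- Suppose w : ℝⁿ∖{0} → ℝ is a C² solution of aᵢⱼ(x) Dᵢⱼw = 0 on ℝⁿ∖{0}, where (aᵢⱼ(x)) is positive definite at each point, w extends continuously to 0 with w(0) = 0, and w(x) → 0 as |x| → ∞. Then w ≡ 0 on ℝⁿ∖{0}. -/
/-!
If `w` were positive somewhere, say at `x₀`, then for small `ε > 0` the function
`v = w + ε exp (x k)` would still be larger at `x₀` than anywhere on a small sphere around `0`
and on a large sphere (`w` is small near `0` and near infinity), so `v` would attain a local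
maximum `p` in the open annulus. There the Hessian of `v` is negative semidefinite, hence
`∑ A i j ∂ᵢ∂ⱼ v (p) ≤ 0` for the positive definite `A = A p`; but the equation for `w` gives
`∑ A i j ∂ᵢ∂ⱼ v (p) = ε exp (p k) A k k > 0`. So `w ≤ 0`, and likewise `-w ≤ 0`.
-/

open Filter Topology Metric Set

theorem IsLocalMax.hasDerivAt_hasDerivAt_nonpos {g g' : ℝ → ℝ} {x T : ℝ} (hmax : IsLocalMax g x)
    (hg : ∀ᶠ t in 𝓝 x, HasDerivAt g (g' t) t) (hg' : HasDerivAt g' T x) : T ≤ 0 := by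
  by_contra! hT
  have hpos : ∀ᶠ t in 𝓝[>] x, 0 < g' t := by
    have hsign := eventually_nhdsWithin_sign_eq_of_deriv_pos (hg'.deriv ▸ hT)
      (hmax.hasDerivAt_eq_zero hg.self_of_nhds)
    filter_upwards [nhdsWithin_le_nhds hsign, self_mem_nhdsWithin] with t ht (hxt : x < t)
    rwa [← sign_eq_one_iff, ht, sign_eq_one_iff, sub_pos]
  obtain ⟨b, hxb : x < b, hb⟩ := mem_nhdsGT_iff_exists_Ioo_subset.1
    (hpos.and (nhdsWithin_le_nhds (hg.and hmax)))
  have hcont : ContinuousOn g (Ico x b) := by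
    intro t ht
    rcases eq_or_lt_of_le ht.1 with rfl | hxt
    · exact hg.self_of_nhds.continuousAt.continuousWithinAt
    · exact (hb ⟨hxt, ht.2⟩).2.1.continuousAt.continuousWithinAt
  have hmono : StrictMonoOn g (Ico x b) := strictMonoOn_of_deriv_pos (convex_Ico x b) hcont
    (by simpa only [interior_Ico] using fun t ht => (hb ht).2.1.deriv ▸ (hb ht).1)
  have hmid : (x + b) / 2 ∈ Ioo x b := ⟨by linarith, by linarith⟩
  exact (hmono (left_mem_Ico.2 hxb) (Ioo_subset_Ico_self hmid) hmid.1).not_ge (hb hmid).2.2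

section NormedSpace

variable {E : Type*} [NormedAddCommGroup E] [NormedSpace ℝ E]

theorem ContDiffAt.differentiableAt_fderiv {v : E → ℝ} {x : E} (h : ContDiffAt ℝ 2 v x) :
    DifferentiableAt ℝ (fderiv ℝ v) x :=
  (h.fderiv_right (m := 1) le_rfl).differentiableAt one_ne_zero

theorem IsLocalMax.fderiv_fderiv_apply_self_nonpos {v : E → ℝ} {p : E} (hmax : IsLocalMax v p)
    (hv : ∀ᶠ y in 𝓝 p, DifferentiableAt ℝ v y) (hv' : DifferentiableAt ℝ (fderiv ℝ v) p)
    (u : E) : fderiv ℝ (fderiv ℝ v) p u u ≤ 0 := by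
  let ℓ : ℝ → E := fun t => p + t • u
  have hℓ (t : ℝ) : HasDerivAt ℓ u t := by
    simpa [ℓ] using ((hasDerivAt_id t).smul_const u).const_add p
  have hℓ0 : ℓ 0 = p := by simp [ℓ]
  have hℓt : Tendsto ℓ (𝓝 0) (𝓝 p) := hℓ0 ▸ (hℓ 0).continuousAt.tendsto
  refine IsLocalMax.hasDerivAt_hasDerivAt_nonpos (g' := fun t => fderiv ℝ v (ℓ t) u)
    ((hℓ0 ▸ hmax : IsLocalMax v (ℓ 0)).comp_continuous (hℓ 0).continuousAt) ?_ ?_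
  · filter_upwards [hℓt.eventually hv] with t ht
    exact ht.hasFDerivAt.comp_hasDerivAt t (hℓ t)
  · have := (hℓ0 ▸ hv'.hasFDerivAt).comp_hasDerivAt 0 (hℓ 0)
    simpa [hℓ0] using this.clm_apply (hasDerivAt_const 0 u)

end NormedSpace

theorem exists_isLocalMax_of_lt_on_spheres {X : Type*} [PseudoMetricSpace X] [ProperSpace X]
    {v : X → ℝ} {a x₀ : X} {δ R : ℝ} (hv : ContinuousOn v (closedBall a R \ ball a δ))
    (hx₀ : x₀ ∈ closedBall a R \ ball a δ)
    (hsphere : ∀ z, dist z a = δ ∨ dist z a = R → v z < v x₀) :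
    ∃ p, δ < dist p a ∧ IsLocalMax v p := by
  have hboundary : ∀ z ∈ (closedBall a R \ ball a δ) \ (ball a R \ closedBall a δ),
      v z < v x₀ := by
    rintro z ⟨⟨hzR, hzδ⟩, hz⟩
    simp only [Set.mem_sdiff, mem_ball, mem_closedBall, not_and, not_lt, not_le] at hzR hzδ hz
    refine hsphere z ?_
    rcases hzR.lt_or_eq with hlt | heq
    · exact Or.inl (le_antisymm (hz hlt) hzδ)
    · exact Or.inr heq
  obtain ⟨p, hp, hmax⟩ := ((isCompact_closedBall a R).diff isOpen_ball).exists_isLocalMax_mem_open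
    (sdiff_subset_sdiff ball_subset_closedBall ball_subset_closedBall) hv hx₀ hboundary
    (isOpen_ball.sdiff isClosed_closedBall)
  exact ⟨p, not_le.1 hp.2, hmax⟩

section Coordinates

variable {ι : Type*} [Fintype ι]

open scoped MatrixOrder in
theorem Matrix.PosSemidef.sum_mul_nonpos {A H : Matrix ι ι ℝ} (hA : A.PosSemidef)
    (hH : ∀ u : ι → ℝ, ∑ i, ∑ j, u i * u j * H i j ≤ 0) : ∑ i, ∑ j, A i j * H i j ≤ 0 := by
  classical
  obtain ⟨B, rfl⟩ := CStarAlgebra.nonneg_iff_eq_star_mul_self.mp hA.nonneg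
  calc ∑ i, ∑ j, (star B * B) i j * H i j = ∑ k, ∑ i, ∑ j, B k i * B k j * H i j := by
        simp only [Matrix.mul_apply, Matrix.star_apply, star_trivial, Finset.sum_mul]
        conv_lhs => enter [2, i]; rw [Finset.sum_comm]
        exact Finset.sum_comm
    _ ≤ 0 := Finset.sum_nonpos fun k _ => hH (B k)

theorem fderiv_const_mul_exp_apply (c : ℝ) (k : ι) (y u : ι → ℝ) :
    fderiv ℝ (fun x => c * Real.exp (x k)) y u = c * Real.exp (y k) * u k := by
  have hderiv : HasFDerivAt (fun x : ι → ℝ => c * Real.exp (x k))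
      (c • Real.exp (y k) • ContinuousLinearMap.proj k) y :=
    (hasFDerivAt_apply k y).exp.const_mul c
  simp [hderiv.fderiv, mul_assoc]

theorem exists_isLocalMax_add_mul_exp {w : (ι → ℝ) → ℝ} (hw : ContinuousOn w {0}ᶜ) (k : ι)
    {x₀ : ι → ℝ} (hx₀ : 0 < w x₀) {δ R : ℝ} (hδ : 0 < δ)
    (hδw : ∀ z, ‖z‖ < δ → w z < w x₀ / 2) (hRw : ∀ z, R ≤ ‖z‖ → w z < w x₀ / 2) :
    ∃ ε > 0, ∃ p ≠ 0, IsLocalMax (fun x => w x + ε * Real.exp (x k)) p := by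
  have hδx₀ : δ ≤ ‖x₀‖ := not_lt.1 fun h => (hδw x₀ h).not_ge (by linarith)
  have hx₀R : ‖x₀‖ < R := not_le.1 fun h => (hRw x₀ h).not_ge (by linarith)
  set ε := w x₀ / 4 * Real.exp (-R)
  have hεexp : ∀ z : ι → ℝ, ‖z‖ ≤ R → ε * Real.exp (z k) ≤ w x₀ / 4 := by
    intro z hz
    have hzk : z k ≤ R := (le_abs_self _).trans ((norm_le_pi_norm z k).trans hz)
    calc ε * Real.exp (z k) = w x₀ / 4 * Real.exp (z k - R) := by
          rw [sub_eq_neg_add, Real.exp_add, ← mul_assoc]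
      _ ≤ w x₀ / 4 := mul_le_of_le_one_right (by positivity) (Real.exp_le_one_iff.2 (by linarith))
  set v : (ι → ℝ) → ℝ := fun x => w x + ε * Real.exp (x k)
  have hsphere : ∀ z, dist z 0 = δ / 2 ∨ dist z 0 = R → v z < v x₀ := by
    intro z hz
    rw [dist_zero_right] at hz
    have hwz : w z < w x₀ / 2 := hz.elim (fun h => hδw z (by linarith)) (fun h => hRw z h.ge)
    have hεz := hεexp z (hz.elim (fun h => by linarith) le_of_eq)
    have hεx₀ : 0 < ε * Real.exp (x₀ k) := by positivity
    simp only [v]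
    linarith
  have hannulus : closedBall (0 : ι → ℝ) R \ ball 0 (δ / 2) ⊆ {0}ᶜ := fun z hz hz0 =>
    hz.2 (mem_singleton_iff.1 hz0 ▸ mem_ball_self (by positivity))
  obtain ⟨p, hp, hmax⟩ := exists_isLocalMax_of_lt_on_spheres
    ((hw.mono hannulus).add (by fun_prop))
    ⟨mem_closedBall.2 (by rw [dist_zero_right]; linarith),
      fun h => by rw [mem_ball, dist_zero_right] at h; linarith⟩ hsphere
  refine ⟨ε, by positivity, p, ?_, hmax⟩
  rintro rfl
  simp only [dist_self] at hp
  linarith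

variable [DecidableEq ι]

noncomputable def secondPartial (v : (ι → ℝ) → ℝ) (x : ι → ℝ) (i j : ι) : ℝ :=
  fderiv ℝ (fun y => fderiv ℝ v y (Pi.single i 1)) x (Pi.single j 1)

theorem secondPartial_eq_fderiv_fderiv {v : (ι → ℝ) → ℝ} {x : ι → ℝ}
    (h : DifferentiableAt ℝ (fderiv ℝ v) x) (i j : ι) :
    secondPartial v x i j = fderiv ℝ (fderiv ℝ v) x (Pi.single j 1) (Pi.single i 1) := by
  simp [secondPartial, fderiv_clm_apply h (differentiableAt_const _)]

theorem fderiv_fderiv_apply_self_eq_sum {v : (ι → ℝ) → ℝ} {x : ι → ℝ}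
    (h : DifferentiableAt ℝ (fderiv ℝ v) x) (u : ι → ℝ) :
    fderiv ℝ (fderiv ℝ v) x u u = ∑ i, ∑ j, u i * u j * secondPartial v x i j := by
  conv_lhs => rw [pi_eq_sum_univ' u]
  simp only [map_sum, map_smul, FunLike.coe_sum, Finset.sum_apply, FunLike.coe_smul,
    Pi.smul_apply, smul_eq_mul, secondPartial_eq_fderiv_fderiv h, Finset.mul_sum]
  exact Finset.sum_congr rfl fun i _ => Finset.sum_congr rfl fun j _ => by ring

theorem secondPartial_neg (v : (ι → ℝ) → ℝ) (x : ι → ℝ) (i j : ι) :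
    secondPartial (fun y => -v y) x i j = -secondPartial v x i j := by
  simp [secondPartial, fderiv_fun_neg]

theorem secondPartial_add {v g : (ι → ℝ) → ℝ} {x : ι → ℝ} (hv : ContDiffAt ℝ 2 v x)
    (hg : ContDiffAt ℝ 2 g x) (i j : ι) :
    secondPartial (fun y => v y + g y) x i j = secondPartial v x i j + secondPartial g x i j := by
  have hfderiv : fderiv ℝ (fun y => v y + g y) =ᶠ[𝓝 x] fderiv ℝ v + fderiv ℝ g := by
    filter_upwards [hv.eventually (by simp), hg.eventually (by simp)] with y hvy hgy
    exact fderiv_fun_add (hvy.differentiableAt (by norm_num)) (hgy.differentiableAt (by norm_num))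
  rw [secondPartial_eq_fderiv_fderiv (hv.add hg).differentiableAt_fderiv, hfderiv.fderiv_eq,
    fderiv_add hv.differentiableAt_fderiv hg.differentiableAt_fderiv,
    secondPartial_eq_fderiv_fderiv hv.differentiableAt_fderiv,
    secondPartial_eq_fderiv_fderiv hg.differentiableAt_fderiv]
  rfl

theorem secondPartial_const_mul_exp (c : ℝ) (k : ι) (x : ι → ℝ) (i j : ι) :
    secondPartial (fun y => c * Real.exp (y k)) x i j
      = c * Real.exp (x k) * (Pi.single i 1 : ι → ℝ) k * (Pi.single j 1 : ι → ℝ) k := by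
  have hfun : (fun y : ι → ℝ => c * Real.exp (y k) * (Pi.single i 1 : ι → ℝ) k)
      = fun y => c * (Pi.single i 1 : ι → ℝ) k * Real.exp (y k) := by
    funext y; ring
  simp only [secondPartial, fderiv_const_mul_exp_apply, hfun]
  ring

theorem IsLocalMax.sum_mul_secondPartial_nonpos {v : (ι → ℝ) → ℝ} {p : ι → ℝ}
    {A : Matrix ι ι ℝ} (hmax : IsLocalMax v p) (hv : ContDiffAt ℝ 2 v p) (hA : A.PosSemidef) :
    ∑ i, ∑ j, A i j * secondPartial v p i j ≤ 0 := by
  have hdiff : ∀ᶠ y in 𝓝 p, DifferentiableAt ℝ v y :=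
    (hv.eventually (by simp)).mono fun y hy => hy.differentiableAt (by norm_num)
  refine hA.sum_mul_nonpos fun u => ?_
  rw [← fderiv_fderiv_apply_self_eq_sum hv.differentiableAt_fderiv]
  exact hmax.fderiv_fderiv_apply_self_nonpos hdiff hv.differentiableAt_fderiv u

theorem not_isLocalMax_add_mul_exp {w : (ι → ℝ) → ℝ} {p : ι → ℝ} {A : Matrix ι ι ℝ} {ε : ℝ}
    (hε : 0 < ε) (k : ι) (hw : ContDiffAt ℝ 2 w p) (hA : A.PosDef)
    (hsub : 0 ≤ ∑ i, ∑ j, A i j * secondPartial w p i j) :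
    ¬ IsLocalMax (fun x => w x + ε * Real.exp (x k)) p := by
  intro hmax
  have hexp : ContDiffAt ℝ 2 (fun x : ι → ℝ => ε * Real.exp (x k)) p := by fun_prop
  have hsplit : ∑ i, ∑ j, A i j * secondPartial (fun x => w x + ε * Real.exp (x k)) p i j
      = ∑ i, ∑ j, A i j * secondPartial w p i j + ε * Real.exp (p k) * A k k := by
    simp only [secondPartial_add hw hexp, secondPartial_const_mul_exp, Pi.single_apply, mul_ite,
      mul_one, mul_zero, mul_add, Finset.sum_add_distrib, Finset.sum_ite_eq, Finset.mem_univ,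
      ↓reduceIte, add_right_inj]
    ring
  have hnonpos := hmax.sum_mul_secondPartial_nonpos (hw.add hexp) hA.posSemidef
  have hpos : 0 < ε * Real.exp (p k) * A k k := by have := hA.diag_pos (i := k); positivity
  linarith

theorem nonpos_of_sum_mul_secondPartial_nonneg [Nonempty ι] {w : (ι → ℝ) → ℝ}
    {A : (ι → ℝ) → Matrix ι ι ℝ}
    (hw : ContDiffOn ℝ 2 w {0}ᶜ) (hA : ∀ x, x ≠ 0 → (A x).PosDef)
    (hsub : ∀ x, x ≠ 0 → 0 ≤ ∑ i, ∑ j, A x i j * secondPartial w x i j)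
    (h0 : Tendsto w (𝓝 0) (𝓝 0)) (hinf : Tendsto w (cocompact (ι → ℝ)) (𝓝 0))
    (x₀ : ι → ℝ) : w x₀ ≤ 0 := by
  by_contra! hx₀
  obtain ⟨k⟩ := ‹Nonempty ι›
  obtain ⟨δ, hδ, hδw⟩ := Metric.eventually_nhds_iff.1
    (h0.eventually (gt_mem_nhds (half_pos hx₀)))
  obtain ⟨R, -, hRw⟩ := hasBasis_cobounded_norm.eventually_iff.1
    ((hinf.eventually (gt_mem_nhds (half_pos hx₀))).filter_mono cobounded_le_cocompact)
  obtain ⟨ε, hε, p, hp0, hmax⟩ := exists_isLocalMax_add_mul_exp hw.continuousOn k hx₀ hδ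
    (fun _ hz => hδw (by rwa [dist_zero_right])) (fun _ hz => hRw hz)
  exact not_isLocalMax_add_mul_exp hε k (hw.contDiffAt (isOpen_compl_singleton.mem_nhds hp0))
    (hA p hp0) (hsub p hp0) hmax

end Coordinates

theorem maximum_principle_punctured {n : ℕ} (hn : 0 < n)
    (w : (Fin n → ℝ) → ℝ) (A : (Fin n → ℝ) → Matrix (Fin n) (Fin n) ℝ)
    (hw : ContDiffOn ℝ 2 w {(0 : Fin n → ℝ)}ᶜ)
    (hA : ∀ x, x ≠ 0 → (A x).PosDef)
    (heq : ∀ x, x ≠ 0 →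
      ∑ i, ∑ j, A x i j
        * fderiv ℝ (fun y => fderiv ℝ w y (Pi.single i 1)) x (Pi.single j 1) = 0)
    (hcont : ContinuousAt w 0) (hw0 : w 0 = 0)
    (hlim : Tendsto w (cocompact (Fin n → ℝ)) (nhds 0)) :
    ∀ x, x ≠ 0 → w x = 0 := by
  intro x _
  have : Nonempty (Fin n) := ⟨⟨0, hn⟩⟩
  have h0 : Tendsto w (𝓝 0) (𝓝 0) := hw0 ▸ hcont
  have hneg : ∀ x, x ≠ 0 → 0 ≤ ∑ i, ∑ j, A x i j * secondPartial (fun y => -w y) x i j := by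
    intro x hx
    simp only [secondPartial_neg, mul_neg, Finset.sum_neg_distrib, neg_nonneg]
    exact (heq x hx).le
  have hle := nonpos_of_sum_mul_secondPartial_nonneg hw hA (fun x hx => (heq x hx).ge) h0 hlim x
  have hge := nonpos_of_sum_mul_secondPartial_nonneg hw.neg hA hneg
    (by simpa using h0.neg) (by simpa using hlim.neg) x
  exact le_antisymm hle (neg_nonpos.1 hge)
end

section
/- Let u(x) = U(s), s = (1/2)Σᵢaᵢxᵢ², with aᵢ > 0 and U ∈ C² satisfying U′ ≥ 1 and U′ + 2sU″ > 0 for s > 0. Then D²u(x) is positive definite for every x ≠ 0; more precisely σₖ(λ(D²u)) ≥ (U′)ᵏσₖ(a) + 2sU″(U′)^{k−1}σₖ(a) > 0 for every k = 1,…,n. -/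
/-!
The Hessian is `U' · diag a + U'' · (a x)(a x)ᵀ`, whose quadratic form at `v` is
`U' ∑ aᵢvᵢ² + U'' (∑ aᵢxᵢvᵢ)²`. By the `a`-weighted Cauchy–Schwarz inequality
`(∑ aᵢxᵢvᵢ)² ≤ 2s ∑ aᵢvᵢ²`, so when `U'' ≤ 0` the form is at least `(U' + 2sU'') ∑ aᵢvᵢ² > 0`.
For the `σₖ` bound, `aᵢ σ_{k-1;i}(a)` is the part of `σₖ(a)` coming from the `k`-subsets
containing `i`, hence `∑ (aᵢxᵢ)² σ_{k-1;i}(a) ≤ (∑ aᵢxᵢ²) σₖ(a) = 2s σₖ(a)`; multiplying by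
`U'' (U')^{k-1} ≤ 0` reverses this inequality.
-/

/-- The `k`-th elementary symmetric polynomial of `a` over the index set `s`. -/
def esym {n : ℕ} (s : Finset (Fin n)) (k : ℕ) (a : Fin n → ℝ) : ℝ :=
  ∑ t ∈ Finset.powersetCard k s, ∏ i ∈ t, a i

open Finset Matrix

namespace esym

variable {n : ℕ} {a : Fin n → ℝ}

lemma nonneg (ha : ∀ i, 0 ≤ a i) (s : Finset (Fin n)) (k : ℕ) : 0 ≤ esym s k a :=
  sum_nonneg fun _ _ => prod_nonneg fun i _ => ha i

lemma pos (ha : ∀ i, 0 < a i) {s : Finset (Fin n)} {k : ℕ} (hk : k ≤ s.card) :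
    0 < esym s k a :=
  sum_pos (fun _ _ => prod_pos fun i _ => ha i) (powersetCard_nonempty.mpr hk)

lemma insert_succ {s : Finset (Fin n)} {i : Fin n} (hi : i ∉ s) (k : ℕ) :
    esym (insert i s) (k + 1) a = esym s (k + 1) a + a i * esym s k a := by
  have hnot : ∀ t ∈ powersetCard k s, i ∉ t := fun t ht hit =>
    hi ((mem_powersetCard.mp ht).1 hit)
  have hdisj : Disjoint (powersetCard (k + 1) s) ((powersetCard k s).image (insert i)) := by
    refine disjoint_left.mpr fun t ht ht' => ?_
    obtain ⟨u, -, rfl⟩ := mem_image.mp ht'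
    exact hi ((mem_powersetCard.mp ht).1 (mem_insert_self i u))
  have hinj : Set.InjOn (insert i) (powersetCard k s : Set (Finset (Fin n))) :=
    fun t ht u hu h => by
      simpa [erase_insert (hnot t ht), erase_insert (hnot u hu)] using congrArg (erase · i) h
  rw [esym, powersetCard_succ_insert hi, sum_union hdisj, sum_image hinj, esym, esym, mul_sum]
  exact congrArg _ (sum_congr rfl fun t ht => prod_insert (hnot t ht))

lemma mul_erase_le (ha : ∀ j, 0 ≤ a j) {s : Finset (Fin n)} {i : Fin n} (hi : i ∈ s) (k : ℕ) :
    a i * esym (s.erase i) k a ≤ esym s (k + 1) a := by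
  conv_rhs => rw [← insert_erase hi, insert_succ (notMem_erase i s)]
  linarith [nonneg ha (s.erase i) (k + 1)]

end esym

lemma sum_sq_mul_esym_erase_le {n : ℕ} {a : Fin n → ℝ} (ha : ∀ i, 0 ≤ a i) (x : Fin n → ℝ)
    (k : ℕ) :
    ∑ i, (a i * x i) ^ 2 * esym (univ.erase i) k a ≤
      (∑ i, a i * x i ^ 2) * esym univ (k + 1) a := by
  rw [sum_mul]
  refine sum_le_sum fun i _ => ?_
  calc (a i * x i) ^ 2 * esym (univ.erase i) k a
      = a i * x i ^ 2 * (a i * esym (univ.erase i) k a) := by ring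
    _ ≤ a i * x i ^ 2 * esym univ (k + 1) a := by
      gcongr
      · exact mul_nonneg (ha i) (sq_nonneg _)
      · exact esym.mul_erase_le ha (mem_univ i) k

section

variable {ι : Type*} [Fintype ι]

lemma sq_sum_mul_le_of_nonneg_weight {w x v : ι → ℝ} (hw : ∀ i, 0 ≤ w i) :
    (∑ i, w i * x i * v i) ^ 2 ≤ (∑ i, w i * x i ^ 2) * ∑ i, w i * v i ^ 2 :=
  sum_sq_le_sum_mul_sum_of_sq_le_mul univ (fun i _ => mul_nonneg (hw i) (sq_nonneg _))
    (fun i _ => mul_nonneg (hw i) (sq_nonneg _)) fun i _ => le_of_eq (by ring)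

lemma sum_mul_sq_pos {w v : ι → ℝ} (hw : ∀ i, 0 < w i) (hv : v ≠ 0) :
    0 < ∑ i, w i * v i ^ 2 := by
  obtain ⟨j, hj⟩ : ∃ j, v j ≠ 0 := Function.ne_iff.mp hv
  exact sum_pos' (fun i _ => mul_nonneg (hw i).le (sq_nonneg _))
    ⟨j, mem_univ j, mul_pos (hw j) (sq_pos_of_ne_zero hj)⟩

variable [DecidableEq ι]

lemma dotProduct_mulVec_diagonal_add_rankOne (p q : ℝ) (a x v : ι → ℝ) :
    v ⬝ᵥ ((Matrix.of fun i j => p * a i * (if i = j then (1 : ℝ) else 0)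
        + q * a i * a j * x i * x j) *ᵥ v)
      = p * ∑ i, a i * v i ^ 2 + q * (∑ i, a i * x i * v i) ^ 2 := by
  simp only [dotProduct, mulVec, of_apply, add_mul, sum_add_distrib, mul_ite, mul_one,
    mul_zero, ite_mul, zero_mul, sum_ite_eq, mem_univ, if_true, mul_add, sq, sum_mul, mul_sum]
  congr 1
  · exact sum_congr rfl fun i _ => by ring
  · exact sum_congr rfl fun i _ => sum_congr rfl fun j _ => by ring

lemma posDef_diagonal_add_rankOne {a x : ι → ℝ} (ha : ∀ i, 0 < a i) {p q : ℝ} (hp : 0 < p)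
    (hpq : 0 < p + q * ∑ i, a i * x i ^ 2) :
    (Matrix.of fun i j => p * a i * (if i = j then (1 : ℝ) else 0)
        + q * a i * a j * x i * x j).PosDef := by
  refine PosDef.of_dotProduct_mulVec_pos ?_ fun v hv => ?_
  · ext i j
    simp only [conjTranspose_apply, of_apply, star_trivial, eq_comm (a := j)]
    split_ifs with h
    · subst h; ring
    · ring
  · rw [star_trivial, dotProduct_mulVec_diagonal_add_rankOne]
    have hA := sum_mul_sq_pos ha hv
    have hCS := sq_sum_mul_le_of_nonneg_weight (x := x) (v := v) fun i => (ha i).le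
    rcases le_or_gt 0 q with hq | hq
    · nlinarith [sq_nonneg (∑ i, a i * x i * v i)]
    · nlinarith

end

theorem hessian_posdef_generalized_symmetric_general {n : ℕ}
    (a : Fin n → ℝ) (ha : ∀ i, 0 < a i) (U : ℝ → ℝ)
    (hU1 : ∀ s, 0 < s → 1 ≤ deriv U s)
    (hU2 : ∀ s, 0 < s → deriv (deriv U) s ≤ 0)
    (hU3 : ∀ s, 0 < s → 0 < deriv U s + 2 * s * deriv (deriv U) s)
    (x : Fin n → ℝ) (hx : x ≠ 0)
    (s : ℝ) (hs : s = (1 / 2) * ∑ i, a i * x i ^ 2) :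
    (Matrix.of fun i j => deriv U s * a i * (if i = j then (1 : ℝ) else 0)
        + deriv (deriv U) s * a i * a j * x i * x j).PosDef
    ∧ ∀ k, 1 ≤ k → k ≤ n →
        (deriv U s) ^ k * esym Finset.univ k a
            + deriv (deriv U) s * (deriv U s) ^ (k - 1)
              * ∑ i, (a i * x i) ^ 2 * esym (Finset.univ.erase i) (k - 1) a
          ≥ (deriv U s) ^ k * esym Finset.univ k a
            + 2 * s * deriv (deriv U) s * (deriv U s) ^ (k - 1) * esym Finset.univ k a
        ∧ 0 < (deriv U s) ^ k * esym Finset.univ k a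
            + 2 * s * deriv (deriv U) s * (deriv U s) ^ (k - 1) * esym Finset.univ k a := by
  have h2s : ∑ i, a i * x i ^ 2 = 2 * s := by rw [hs]; ring
  have hs0 : 0 < s := by linarith [sum_mul_sq_pos ha hx]
  set p := deriv U s
  set q := deriv (deriv U) s
  have hp : 0 < p := one_pos.trans_le (hU1 s hs0)
  have hpq : 0 < p + 2 * s * q := hU3 s hs0
  refine ⟨posDef_diagonal_add_rankOne ha hp (by rwa [h2s, mul_comm q]), fun k hk hkn => ?_⟩
  obtain ⟨m, rfl⟩ : ∃ m, k = m + 1 := ⟨k - 1, by omega⟩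
  rw [Nat.add_sub_cancel]
  have hsum := sum_sq_mul_esym_erase_le (fun i => (ha i).le) x m
  rw [h2s] at hsum
  have hqp : q * p ^ m ≤ 0 := mul_nonpos_of_nonpos_of_nonneg (hU2 s hs0) (pow_nonneg hp.le m)
  refine ⟨by linarith [mul_le_mul_of_nonpos_left hsum hqp], ?_⟩
  have hσ : 0 < esym univ (m + 1) a := esym.pos ha (by simpa using hkn)
  calc 0 < (p + 2 * s * q) * p ^ m * esym univ (m + 1) a := by positivity
    _ = _ := by ring

theorem hessian_posdef_generalized_symmetric {n : ℕ} (hn : 0 < n)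
    (a : Fin n → ℝ) (ha : ∀ i, 0 < a i) (U : ℝ → ℝ) (hU : ContDiff ℝ 2 U)
    (hU1 : ∀ s, 0 < s → 1 ≤ deriv U s)
    (hU2 : ∀ s, 0 < s → deriv (deriv U) s ≤ 0)
    (hU3 : ∀ s, 0 < s → 0 < deriv U s + 2 * s * deriv (deriv U) s)
    (x : Fin n → ℝ) (hx : x ≠ 0)
    (s : ℝ) (hs : s = (1 / 2) * ∑ i, a i * x i ^ 2) :
    (Matrix.of fun i j => deriv U s * a i * (if i = j then (1 : ℝ) else 0)
        + deriv (deriv U) s * a i * a j * x i * x j).PosDef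
    ∧ ∀ k, 1 ≤ k → k ≤ n →
        (deriv U s) ^ k * esym Finset.univ k a
            + deriv (deriv U) s * (deriv U s) ^ (k - 1)
              * ∑ i, (a i * x i) ^ 2 * esym (Finset.univ.erase i) (k - 1) a
          ≥ (deriv U s) ^ k * esym Finset.univ k a
            + 2 * s * deriv (deriv U) s * (deriv U s) ^ (k - 1) * esym Finset.univ k a
        ∧ 0 < (deriv U s) ^ k * esym Finset.univ k a
            + 2 * s * deriv (deriv U) s * (deriv U s) ^ (k - 1) * esym Finset.univ k a :=
  hessian_posdef_generalized_symmetric_general a ha U hU1 hU2 hU3 x hx s hs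
end

section
/- (Rigidity of generalized symmetric solutions, Monge–Ampère quotient form) Suppose 0 < a₁ ≤ ⋯ ≤ aₙ, b > 0, c₀ = ∏ᵢ aᵢ/(aᵢ+2b), 0 < s₁ < s₂, and U ∈ C²((s₁,s₂)) satisfies for every s ∈ (s₁,s₂) and every i₀ ∈ {1,…,n}: (U′)ⁿ + 2sU″(U′)^{n−1} − c₀∏ᵢ(U′+2b/aᵢ) = 2c₀ s U″ ∏_{i≠i₀}(U′+2b/aᵢ), with U′ > 0 on (s₁,s₂). Then either U″ ≡ 0 on (s₁,s₂), or a₁ = a₂ = ⋯ = aₙ. -/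
/-!
The left-hand side of the equation does not depend on `i₀`. At a point where `U'' ≠ 0` the
coefficient `2 c₀ s U''` on the right is nonzero, so the products `∏_{i ≠ i₀} (U' + 2b/aᵢ)` agree
for all `i₀`; since every factor is positive, the omitted factors `U' + 2b/a_{i₀}` agree as well,
which forces all `aᵢ` to be equal.
-/

open Set

theorem Finset.eq_of_prod_erase_eq {ι M : Type*} [CommMonoidWithZero M] [IsRightCancelMulZero M]
    [DecidableEq ι] {s : Finset ι} {f : ι → M} {i j : ι} (hi : i ∈ s) (hj : j ∈ s)
    (hne : ∏ k ∈ s.erase i, f k ≠ 0) (h : ∏ k ∈ s.erase i, f k = ∏ k ∈ s.erase j, f k) :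
    f i = f j := by
  refine mul_right_cancel₀ hne ?_
  rw [Finset.mul_prod_erase s f hi, h, Finset.mul_prod_erase s f hj]

theorem rigidity_generalized_symmetric_MA_quotient_general {n : ℕ}
    (a : Fin n → ℝ) (ha : ∀ i, 0 < a i)
    (b c0 : ℝ) (hb : 0 < b) (hc0 : c0 = ∏ i, a i / (a i + 2 * b))
    (s₁ s₂ : ℝ) (hs₁ : 0 < s₁)
    (U : ℝ → ℝ)
    (hU' : ∀ s ∈ Ioo s₁ s₂, 0 < deriv U s)
    (heq : ∀ s ∈ Ioo s₁ s₂, ∀ i₀ : Fin n,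
      (deriv U s) ^ n + 2 * s * deriv (deriv U) s * (deriv U s) ^ (n - 1)
          - c0 * ∏ i, (deriv U s + 2 * b / a i)
        = 2 * c0 * s * deriv (deriv U) s
          * ∏ i ∈ Finset.univ.erase i₀, (deriv U s + 2 * b / a i)) :
    (∀ s ∈ Ioo s₁ s₂, deriv (deriv U) s = 0) ∨ (∀ i j, a i = a j) := by
  refine or_iff_not_imp_left.mpr fun h i j => ?_
  obtain ⟨s, hs, hU''⟩ := not_forall₂.mp h
  have hc0_pos : 0 < c0 := hc0 ▸ Finset.prod_pos fun k _ => by have := ha k; positivity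
  have hcoef : 2 * c0 * s * deriv (deriv U) s ≠ 0 := by
    have : 0 < s := hs₁.trans hs.1
    positivity
  have hfactor : ∀ k, deriv U s + 2 * b / a k ≠ 0 := fun k => by
    have := hU' s hs; have := ha k; positivity
  have hprod := mul_left_cancel₀ hcoef ((heq s hs i).symm.trans (heq s hs j))
  have hfac_eq := Finset.eq_of_prod_erase_eq (Finset.mem_univ i) (Finset.mem_univ j)
    (Finset.prod_ne_zero_iff.mpr fun k _ => hfactor k) hprod
  exact inv_injective (mul_left_cancel₀ (by positivity) (add_left_cancel hfac_eq))

theorem rigidity_generalized_symmetric_MA_quotient {n : ℕ} (hn : 0 < n)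
    (a : Fin n → ℝ) (ha : ∀ i, 0 < a i) (hmono : Monotone a)
    (b c0 : ℝ) (hb : 0 < b) (hc0 : c0 = ∏ i, a i / (a i + 2 * b))
    (s₁ s₂ : ℝ) (hs₁ : 0 < s₁) (hs : s₁ < s₂)
    (U : ℝ → ℝ) (hU : ContDiffOn ℝ 2 U (Ioo s₁ s₂))
    (hU' : ∀ s ∈ Ioo s₁ s₂, 0 < deriv U s)
    (heq : ∀ s ∈ Ioo s₁ s₂, ∀ i₀ : Fin n,
      (deriv U s) ^ n + 2 * s * deriv (deriv U) s * (deriv U s) ^ (n - 1)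
          - c0 * ∏ i, (deriv U s + 2 * b / a i)
        = 2 * c0 * s * deriv (deriv U) s
          * ∏ i ∈ Finset.univ.erase i₀, (deriv U s + 2 * b / a i)) :
    (∀ s ∈ Ioo s₁ s₂, deriv (deriv U) s = 0) ∨ (∀ i j, a i = a j) :=
  rigidity_generalized_symmetric_MA_quotient_general a ha b c0 hb hc0 s₁ s₂ hs₁ U hU' heq
end

section
/- (Rigidity, inverse harmonic Hessian case) Suppose 0 < a₁ ≤ ⋯ ≤ aₙ, c₀ > 0, 0 < s₁ < s₂, and U ∈ C²((s₁,s₂)) with U′ > 0 satisfies for every s ∈ (s₁,s₂) and every i₀: c₀(U′)ⁿσₙ(a) + 2c₀ sU″(U′)^{n−1}σₙ(a) − (U′)^{n−1}σ_{n−1}(a) = 2sU″(U′)^{n−2} a_{i₀} σ_{n−2;i₀}(a). Then either U″ ≡ 0 on (s₁,s₂) (and U′ = σ_{n−1}(a)/(c₀σₙ(a))), or a₁ = ⋯ = aₙ. -/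
/-!
If `U''` vanishes identically, the equation reduces to `c₀ σₙ(a) U' = σ_{n-1}(a)`. Otherwise, at a
point where `U'' ≠ 0` the left-hand side does not depend on `i₀`, so neither does
`aᵢ σ_{n-2;i}(a)`. Since `σ_{n-1}(a) = ∏_{k ≠ i} a_k + aᵢ σ_{n-2;i}(a)`, the products
`∏_{k ≠ i} a_k = σₙ(a) / aᵢ` are then all equal, hence so are the `aᵢ`.
-/

open Set

theorem Multiset.esymm_cons_succ {R : Type*} [CommSemiring R] (x : R) (m : Multiset R) (k : ℕ) :
    (x ::ₘ m).esymm (k + 1) = m.esymm (k + 1) + x * m.esymm k := by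
  simp [Multiset.esymm, Multiset.powersetCard_cons, Multiset.map_map, Multiset.sum_map_mul_left]

section esym

variable {n : ℕ}

lemma esym_eq_esymm (s : Finset (Fin n)) (k : ℕ) (a : Fin n → ℝ) :
    esym s k a = (s.val.map a).esymm k :=
  (Finset.esymm_map_val a s k).symm

lemma esym_succ_of_mem {s : Finset (Fin n)} {i : Fin n} (hi : i ∈ s) (k : ℕ) (a : Fin n → ℝ) :
    esym s (k + 1) a = esym (s.erase i) (k + 1) a + a i * esym (s.erase i) k a := by
  simp only [esym_eq_esymm]
  conv_lhs => rw [← Finset.insert_erase hi, Finset.insert_val_of_notMem (Finset.notMem_erase i s),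
    Multiset.map_cons, Multiset.esymm_cons_succ]

lemma esym_card (s : Finset (Fin n)) (a : Fin n → ℝ) : esym s s.card a = ∏ i ∈ s, a i := by
  rw [esym, Finset.powersetCard_self, Finset.sum_singleton]

lemma esym_univ_self (a : Fin n → ℝ) : esym Finset.univ n a = ∏ i, a i := by
  simpa using esym_card Finset.univ a

lemma esym_univ_sub_one (hn : 2 ≤ n) (a : Fin n → ℝ) (i : Fin n) :
    esym Finset.univ (n - 1) a
      = ∏ k ∈ Finset.univ.erase i, a k + a i * esym (Finset.univ.erase i) (n - 2) a := by
  have hcard : (Finset.univ.erase i).card = n - 2 + 1 := by simp; omega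
  rw [show n - 1 = n - 2 + 1 by omega, esym_succ_of_mem (Finset.mem_univ i), ← hcard, esym_card]

lemma eq_of_mul_esym_erase_eq (hn : 2 ≤ n) {a : Fin n → ℝ} (ha : ∀ i, a i ≠ 0)
    (h : ∀ i j, a i * esym (Finset.univ.erase i) (n - 2) a
      = a j * esym (Finset.univ.erase j) (n - 2) a) (i j : Fin n) : a i = a j := by
  have hprod : ∏ k ∈ Finset.univ.erase i, a k = ∏ k ∈ Finset.univ.erase j, a k := by
    linarith [h i j, esym_univ_sub_one hn a i, esym_univ_sub_one hn a j]
  have hne : ∏ k ∈ Finset.univ.erase i, a k ≠ 0 := Finset.prod_ne_zero_iff.mpr fun k _ => ha k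
  refine mul_right_cancel₀ hne ?_
  rw [Finset.mul_prod_erase _ _ (Finset.mem_univ i), hprod,
    Finset.mul_prod_erase _ _ (Finset.mem_univ j)]

end esym

lemma eq_div_of_mul_pow_sub_pow_mul_eq_zero {n : ℕ} (hn : n ≠ 0) {c u p q : ℝ} (hu : u ≠ 0)
    (hcp : c * p ≠ 0) (h : c * u ^ n * p - u ^ (n - 1) * q = 0) : u = q / (c * p) := by
  have hfac : u ^ (n - 1) * (c * p * u - q) = 0 := by
    rw [← h, show n = n - 1 + 1 by omega, pow_succ, Nat.add_sub_cancel]; ring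
  rw [eq_div_iff hcp]
  linarith [(mul_eq_zero.mp hfac).resolve_left (pow_ne_zero _ hu)]

theorem rigidity_generalized_symmetric_inverse_harmonic_general {n : ℕ} (hn : 2 ≤ n)
    (a : Fin n → ℝ) (ha : ∀ i, 0 < a i)
    (c0 : ℝ) (hc0 : 0 < c0)
    (s₁ s₂ : ℝ) (hs₁ : 0 < s₁)
    (U : ℝ → ℝ)
    (hU' : ∀ s ∈ Ioo s₁ s₂, 0 < deriv U s)
    (heq : ∀ s ∈ Ioo s₁ s₂, ∀ i₀ : Fin n,
      c0 * (deriv U s) ^ n * esym Finset.univ n a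
          + 2 * c0 * s * deriv (deriv U) s * (deriv U s) ^ (n - 1) * esym Finset.univ n a
          - (deriv U s) ^ (n - 1) * esym Finset.univ (n - 1) a
        = 2 * s * deriv (deriv U) s * (deriv U s) ^ (n - 2) * a i₀
            * esym (Finset.univ.erase i₀) (n - 2) a) :
    ((∀ s ∈ Ioo s₁ s₂, deriv (deriv U) s = 0)
        ∧ ∀ s ∈ Ioo s₁ s₂,
            deriv U s = esym Finset.univ (n - 1) a / (c0 * esym Finset.univ n a))
      ∨ (∀ i j, a i = a j) := by
  by_cases hflat : ∀ s ∈ Ioo s₁ s₂, deriv (deriv U) s = 0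
  · refine Or.inl ⟨hflat, fun s hs => ?_⟩
    have hσ : 0 < esym Finset.univ n a := by
      rw [esym_univ_self]; exact Finset.prod_pos fun i _ => ha i
    have hs_eq := heq s hs ⟨0, by omega⟩
    simp only [hflat s hs, mul_zero, zero_mul, add_zero] at hs_eq
    exact eq_div_of_mul_pow_sub_pow_mul_eq_zero (by omega) (hU' s hs).ne' (by positivity) hs_eq
  · push Not at hflat
    obtain ⟨s, hs, hU''⟩ := hflat
    have hfac : 2 * s * deriv (deriv U) s * deriv U s ^ (n - 2) ≠ 0 := by
      have := (hU' s hs).ne'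
      have := hs₁.trans hs.1
      positivity
    refine Or.inr (eq_of_mul_esym_erase_eq hn (fun i => (ha i).ne') fun i j => ?_)
    refine mul_left_cancel₀ hfac ?_
    simp only [← mul_assoc, ← heq s hs i, ← heq s hs j]

theorem rigidity_generalized_symmetric_inverse_harmonic {n : ℕ} (hn : 2 ≤ n)
    (a : Fin n → ℝ) (ha : ∀ i, 0 < a i) (hmono : Monotone a)
    (c0 : ℝ) (hc0 : 0 < c0)
    (s₁ s₂ : ℝ) (hs₁ : 0 < s₁) (hs : s₁ < s₂)
    (U : ℝ → ℝ) (hU : ContDiffOn ℝ 2 U (Ioo s₁ s₂))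
    (hU' : ∀ s ∈ Ioo s₁ s₂, 0 < deriv U s)
    (heq : ∀ s ∈ Ioo s₁ s₂, ∀ i₀ : Fin n,
      c0 * (deriv U s) ^ n * esym Finset.univ n a
          + 2 * c0 * s * deriv (deriv U) s * (deriv U s) ^ (n - 1) * esym Finset.univ n a
          - (deriv U s) ^ (n - 1) * esym Finset.univ (n - 1) a
        = 2 * s * deriv (deriv U) s * (deriv U s) ^ (n - 2) * a i₀
            * esym (Finset.univ.erase i₀) (n - 2) a) :
    ((∀ s ∈ Ioo s₁ s₂, deriv (deriv U) s = 0)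
        ∧ ∀ s ∈ Ioo s₁ s₂,
            deriv U s = esym Finset.univ (n - 1) a / (c0 * esym Finset.univ n a))
      ∨ (∀ i j, a i = a j) :=
  rigidity_generalized_symmetric_inverse_harmonic_general hn a ha c0 hc0 s₁ s₂ hs₁ U hU' heq
end
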